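/- For any cellular automaton F on A^{Z^2}, the supremum over all finite open covers C of limsup_{n→∞} (1/n) h(C_n, F) equals the supremum over all finite open covers C of limsup_{n→∞} (1/n) h(C'_n, F), and both equal ER(S_0, F) = ER(A^{Z^2}, F). Here C_n = ⋁_{v∈E_n} σ^v(C) is built from the full square E_n while C'_n uses only the band E'_n. -/

import Mathlib

abbrev Config (A : Type*) : Type _ := ℤ × ℤ → A

/-- The shift by `v`: `(shift v x) u = x (u + v)`. -/
def shift {A : Type*} (v : ℤ × ℤ) (x : Config A) : Config A := fun u => x (u + v)

/-- The square `E_n = {(i,j) : |i|,|j| ≤ n}`. -/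
noncomputable def Esq (n : ℕ) : Finset (ℤ × ℤ) := Finset.Icc (-(n : ℤ), -(n : ℤ)) ((n : ℤ), (n : ℤ))

/-- The band `E'_n = E_n \ E_{n-r}` (outer band of `E_n` of width `r`). -/
noncomputable def Eband (r n : ℕ) : Finset (ℤ × ℤ) := Esq n \ Esq (n - r)

/-- `F` is a cellular automaton of radius `r`: it commutes with all shifts and
its value at the origin only depends on the coordinates in `E_r`. -/
def IsCA {A : Type*} (F : Config A → Config A) (r : ℕ) : Prop :=
  (∀ v x, F (shift v x) = shift v (F x)) ∧
    ∀ x y : Config A, (∀ u ∈ Esq r, x u = y u) → F x (0, 0) = F y (0, 0)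

/-- Shannon entropy `H_μ` of the finite partition given by the fibers of `p`. -/
noncomputable def partEnt {X : Type*} [MeasurableSpace X] (μ : MeasureTheory.Measure X)
    {ι : Type*} [Fintype ι] (p : X → ι) : ℝ :=
  ∑ i : ι, Real.negMulLog ((μ (p ⁻¹' {i})).toReal)

/-- Kolmogorov–Sinai entropy `h_μ(P,F)` of the partition `p` with respect to `F`:
the limit of `H_μ(⋁_{i=0}^{N-1} F^{-i} P)/N`. -/
noncomputable def ksEnt {X : Type*} [MeasurableSpace X] (μ : MeasureTheory.Measure X)
    (F : X → X) {ι : Type*} [Fintype ι] (p : X → ι) : ℝ :=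
  Filter.atTop.limsup fun N : ℕ =>
    partEnt μ (fun x => fun i : Fin N => p (F^[(i : ℕ)] x)) / (N : ℝ)

/-- The partition `P_n = ⋁_{v ∈ E_n} σ^v(P)`. -/
def sqJoin {A ι : Type*} (p : Config A → ι) (n : ℕ) :
    Config A → ({v : ℤ × ℤ // v ∈ Esq n} → ι) :=
  fun x v => p (shift v.1 x)

/-- The partition `P'_n = ⋁_{v ∈ E'_n} σ^v(P)`. -/
def bandJoin {A ι : Type*} (p : Config A → ι) (r n : ℕ) :
    Config A → ({v : ℤ × ℤ // v ∈ Eband r n} → ι) :=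
  fun x v => p (shift v.1 x)

/-- The clopen partition `S_0` of `A^{ℤ²}` according to the coordinate `(0,0)`. -/
def p0 {A : Type*} : Config A → A := fun x => x (0, 0)

/-- The entropy rate `ER_μ(P,F) = limsup_n h_μ(P'_n,F)/n` of a partition `p`,
for a CA of radius `r`. -/
noncomputable def ERpart {A : Type*} [MeasurableSpace A] (μ : MeasureTheory.Measure (Config A))
    (F : Config A → Config A) {ι : Type*} [Fintype ι] (p : Config A → ι) (r : ℕ) : ℝ :=
  Filter.atTop.limsup fun n : ℕ => ksEnt μ F (bandJoin p r n) / (n : ℝ)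

/-- The entropy rate `ER_μ(A^{ℤ²},F)`: the supremum of `ER_μ(P,F)` over all
finite measurable partitions `P`. -/
noncomputable def ERsys {A : Type*} [MeasurableSpace A] (μ : MeasureTheory.Measure (Config A))
    (F : Config A → Config A) (r : ℕ) : ℝ :=
  sSup {x : ℝ | ∃ (k : ℕ) (p : Config A → Fin (k + 1)),
    (∀ i, MeasurableSet (p ⁻¹' {i})) ∧ x = ERpart μ F p r}

/-- `N(C)`: the smallest cardinality of a finite subcover of `C`. -/
noncomputable def coverNum {X ι : Type*} [Fintype ι] (C : ι → Set X) : ℕ :=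
  sInf {m : ℕ | ∃ s : Finset ι, s.card = m ∧ (⋃ i ∈ s, C i) = Set.univ}

/-- Topological entropy `h(C,F)` of an open cover `C` with respect to `F`:
the limit of `log N(⋁_{i=0}^{N-1} F^{-i} C)/N`. -/
noncomputable def covEnt {X ι : Type*} [Fintype ι] (F : X → X) (C : ι → Set X) : ℝ :=
  Filter.atTop.limsup fun N : ℕ =>
    Real.log ((coverNum fun g : Fin N → ι => ⋂ i : Fin N, (F^[(i : ℕ)]) ⁻¹' C (g i) : ℕ) : ℝ) /
      (N : ℝ)

/-- The cover `C'_n = ⋁_{v ∈ E'_n} σ^v(C)`. -/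
def covBand {A ι : Type*} (C : ι → Set (Config A)) (r n : ℕ) :
    ({v : ℤ × ℤ // v ∈ Eband r n} → ι) → Set (Config A) :=
  fun g => ⋂ v : {v : ℤ × ℤ // v ∈ Eband r n}, shift v.1 ⁻¹' C (g v)

/-- The cover `C_n = ⋁_{v ∈ E_n} σ^v(C)`. -/
def covSq {A ι : Type*} (C : ι → Set (Config A)) (n : ℕ) :
    ({v : ℤ × ℤ // v ∈ Esq n} → ι) → Set (Config A) :=
  fun g => ⋂ v : {v : ℤ × ℤ // v ∈ Esq n}, shift v.1 ⁻¹' C (g v)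

/-- Topological entropy rate `ER(C,F) = limsup_n h(C'_n,F)/n` of a cover `C`,
for a CA of radius `r`. -/
noncomputable def ERcov {A ι : Type*} [Fintype ι] (F : Config A → Config A)
    (C : ι → Set (Config A)) (r : ℕ) : ℝ :=
  Filter.atTop.limsup fun n : ℕ => covEnt F (covBand C r n) / (n : ℝ)

/-- The clopen cover `S_0` of `A^{ℤ²}` by the value of the coordinate `(0,0)`. -/
def S0cov {A : Type*} : A → Set (Config A) := fun a => {x | x (0, 0) = a}

/-- Topological entropy rate `ER(A^{ℤ²},F)`: the supremum of `ER(C,F)` over all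
finite open covers `C`. -/
noncomputable def ERtop {A : Type*} [TopologicalSpace A] (F : Config A → Config A) (r : ℕ) : ℝ :=
  sSup {x : ℝ | ∃ (m : ℕ) (C : Fin (m + 1) → Set (Config A)),
    (∀ i, IsOpen (C i)) ∧ (⋃ i, C i) = Set.univ ∧ x = ERcov F C r}

open Filter Set

section Geometry

@[simp] lemma zero_pair_add (v : ℤ × ℤ) : ((0, 0) : ℤ × ℤ) + v = v := by
  simp [Prod.ext_iff]

lemma mem_Esq {n : ℕ} {v : ℤ × ℤ} :
    v ∈ Esq n ↔ -(n : ℤ) ≤ v.1 ∧ v.1 ≤ n ∧ -(n : ℤ) ≤ v.2 ∧ v.2 ≤ n := by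
  simp only [Esq, Finset.mem_Icc, Prod.le_def]
  tauto

lemma Esq_mono {m n : ℕ} (h : m ≤ n) : Esq m ⊆ Esq n := by
  intro v hv
  rw [mem_Esq] at *
  have : (m : ℤ) ≤ n := by exact_mod_cast h
  omega

lemma Eband_subset {r n : ℕ} : Eband r n ⊆ Esq n := Finset.sdiff_subset

lemma mem_Esq_or_band {r n : ℕ} {v : ℤ × ℤ} (hv : v ∈ Esq n) :
    v ∈ Esq (n - r) ∨ v ∈ Eband r n := by
  by_cases h : v ∈ Esq (n - r)
  · exact Or.inl h
  · exact Or.inr (Finset.mem_sdiff.2 ⟨hv, h⟩)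

lemma add_mem_Esq_sub {r n : ℕ} (hrn : r ≤ n) {u v : ℤ × ℤ}
    (hu : u ∈ Esq r) (hv : v ∈ Esq (n - r)) : u + v ∈ Esq n := by
  rw [mem_Esq] at *
  have hc : ((n - r : ℕ) : ℤ) = (n : ℤ) - r := by
    push_cast [hrn]; ring
  rw [hc] at hv
  simp only [Prod.fst_add, Prod.snd_add]
  omega

lemma add_mem_Esq_add {M n : ℕ} {u v : ℤ × ℤ}
    (hu : u ∈ Esq M) (hv : v ∈ Esq n) : u + v ∈ Esq (n + M) := by
  rw [mem_Esq] at *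
  simp only [Prod.fst_add, Prod.snd_add]
  push_cast
  omega

lemma card_Esq (k : ℕ) : (Esq k).card = (2 * k + 1) ^ 2 := by
  rw [Esq, Finset.card_Icc_prod]
  simp only [Int.card_Icc]
  have : ((k : ℤ) + 1 - -(k : ℤ)).toNat = 2 * k + 1 := by omega
  rw [this]; ring

lemma card_Eband_le (r n : ℕ) (hn : 1 ≤ n) : (Eband r n).card ≤ (12 * r + 4) * n := by
  have hsub : Esq (n - r) ⊆ Esq n := Esq_mono (Nat.sub_le n r)
  have h1 : (Eband r n).card = (Esq n).card - (Esq (n - r)).card :=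
    Finset.card_sdiff_of_subset hsub
  rw [h1, card_Esq, card_Esq]
  rw [Nat.sub_le_iff_le_add]
  rcases le_or_gt r n with h | h
  · obtain ⟨a, rfl⟩ := Nat.exists_eq_add_of_le h
    rw [Nat.add_sub_cancel_left]
    nlinarith
  · have hnr : n - r = 0 := by omega
    rw [hnr]
    nlinarith

end Geometry

section Shift

variable {A : Type*} {F : Config A → Config A} {r : ℕ}

lemma iterate_shift_comm (hF : IsCA F r) (v : ℤ × ℤ) (t : ℕ) (x : Config A) :
    F^[t] (shift v x) = shift v (F^[t] x) := by
  induction t with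
  | zero => rfl
  | succ t ih => rw [Function.iterate_succ_apply', Function.iterate_succ_apply', ih, hF.1]

lemma IsCA.local_eq (hF : IsCA F r) {x y : Config A} (v : ℤ × ℤ)
    (h : ∀ u ∈ Esq r, x (u + v) = y (u + v)) : F x v = F y v := by
  have h1 : F (shift v x) (0, 0) = F (shift v y) (0, 0) := hF.2 _ _ (fun u hu => h u hu)
  rw [hF.1, hF.1] at h1
  simpa [shift] using h1

lemma IsCA.step (hF : IsCA F r) {n : ℕ} (hrn : r ≤ n) {x y : Config A}
    (h : ∀ v ∈ Esq n, x v = y v) : ∀ v ∈ Esq (n - r), F x v = F y v := by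
  intro v hv
  exact hF.local_eq v (fun u hu => h _ (add_mem_Esq_sub hrn hu hv))

end Shift

section CoverNum

variable {X ι κ : Type*} [Fintype ι] [Fintype κ]

lemma coverNum_le {C : ι → Set X} {s : Finset ι}
    (hs : (⋃ i ∈ s, C i) = Set.univ) : coverNum C ≤ s.card :=
  Nat.sInf_le ⟨s, rfl, hs⟩

lemma coverNum_spec {C : ι → Set X} (hC : (⋃ i, C i) = Set.univ) :
    ∃ s : Finset ι, s.card = coverNum C ∧ (⋃ i ∈ s, C i) = Set.univ := by
  have hne : {m : ℕ | ∃ s : Finset ι, s.card = m ∧ (⋃ i ∈ s, C i) = Set.univ}.Nonempty :=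
    ⟨(Finset.univ : Finset ι).card, Finset.univ, rfl, by simpa using hC⟩
  obtain ⟨s, h1, h2⟩ := Nat.sInf_mem hne
  exact ⟨s, h1, h2⟩

lemma coverNum_le_card {C : ι → Set X} (hC : (⋃ i, C i) = Set.univ) :
    coverNum C ≤ Fintype.card ι := by
  simpa using coverNum_le (s := (Finset.univ : Finset ι)) (by simpa using hC)

lemma coverNum_le_of_refines {C : ι → Set X} {D : κ → Set X}
    (hD : (⋃ j, D j) = Set.univ) (h : ∀ j, ∃ i, D j ⊆ C i) :
    coverNum C ≤ coverNum D := by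
  classical
  obtain ⟨s, hcard, hcov⟩ := coverNum_spec hD
  choose φ hφ using h
  refine le_trans (coverNum_le (s := s.image φ) ?_) (le_trans Finset.card_image_le hcard.le)
  apply Set.eq_univ_of_forall
  intro x
  have hx : x ∈ ⋃ j ∈ s, D j := hcov ▸ Set.mem_univ x
  obtain ⟨j, hj, hxj⟩ := Set.mem_iUnion₂.1 hx
  exact Set.mem_iUnion₂.2 ⟨φ j, Finset.mem_image_of_mem φ hj, hφ j hxj⟩

lemma one_le_coverNum [Nonempty X] {C : ι → Set X} (hC : (⋃ i, C i) = Set.univ) :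
    1 ≤ coverNum C := by
  obtain ⟨s, hcard, hcov⟩ := coverNum_spec hC
  rcases s.eq_empty_or_nonempty with rfl | hs
  · exfalso
    have huniv : (Set.univ : Set X).Nonempty := Set.univ_nonempty
    rw [← hcov] at huniv
    simp at huniv
  · rw [← hcard]; exact hs.card_pos

lemma coverNum_reindex (e : κ ≃ ι) (C : ι → Set X) :
    coverNum (fun j => C (e j)) = coverNum C := by
  classical
  unfold coverNum
  congr 1
  ext m
  constructor
  · rintro ⟨s, rfl, hs⟩
    refine ⟨s.image e, by rw [Finset.card_image_of_injective _ e.injective], ?_⟩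
    apply Set.eq_univ_of_forall
    intro x
    have hx : x ∈ ⋃ j ∈ s, C (e j) := hs ▸ Set.mem_univ x
    obtain ⟨j, hj, hxj⟩ := Set.mem_iUnion₂.1 hx
    exact Set.mem_iUnion₂.2 ⟨e j, Finset.mem_image_of_mem e hj, hxj⟩
  · rintro ⟨s, rfl, hs⟩
    refine ⟨s.image e.symm, by rw [Finset.card_image_of_injective _ e.symm.injective], ?_⟩
    apply Set.eq_univ_of_forall
    intro x
    have hx : x ∈ ⋃ i ∈ s, C i := hs ▸ Set.mem_univ x
    obtain ⟨i, hi, hxi⟩ := Set.mem_iUnion₂.1 hx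
    refine Set.mem_iUnion₂.2 ⟨e.symm i, Finset.mem_image_of_mem _ hi, by simpa using hxi⟩

end CoverNum

section CovEnt

variable {X ι κ : Type*} [Fintype ι] [Fintype κ] (F : X → X)

/-- The `N`-fold join of a cover under preimages of iterates of `F`. -/
def joinC (C : ι → Set X) (N : ℕ) : (Fin N → ι) → Set X :=
  fun g => ⋂ i : Fin N, (F^[(i : ℕ)]) ⁻¹' C (g i)

lemma covEnt_eq (C : ι → Set X) :
    covEnt F C = Filter.atTop.limsup fun N : ℕ =>
      Real.log ((coverNum (joinC F C N) : ℕ) : ℝ) / (N : ℝ) := rfl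

lemma mem_joinC {C : ι → Set X} {N : ℕ} {g : Fin N → ι} {x : X} :
    x ∈ joinC F C N g ↔ ∀ t : Fin N, F^[(t : ℕ)] x ∈ C (g t) := by
  simp [joinC]

lemma joinC_covers {C : ι → Set X} (hC : (⋃ i, C i) = Set.univ) (N : ℕ) :
    (⋃ g : Fin N → ι, joinC F C N g) = Set.univ := by
  apply Set.eq_univ_of_forall
  intro x
  have hC' : ∀ y : X, ∃ i, y ∈ C i := fun y => by
    have : y ∈ ⋃ i, C i := hC ▸ Set.mem_univ y
    exact Set.mem_iUnion.1 this
  choose g hg using fun t : Fin N => hC' (F^[(t : ℕ)] x)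
  exact Set.mem_iUnion.2 ⟨g, (mem_joinC F).2 hg⟩

lemma log_nat_mono {a b : ℕ} (h : a ≤ b) : Real.log a ≤ Real.log b := by
  rcases Nat.eq_zero_or_pos a with rfl | ha
  · simpa using Real.log_natCast_nonneg b
  · exact Real.log_le_log (by exact_mod_cast ha) (by exact_mod_cast h)

lemma covEnt_term_nonneg [Nonempty X] {C : ι → Set X} (hC : (⋃ i, C i) = Set.univ) (N : ℕ) :
    0 ≤ Real.log ((coverNum (joinC F C N) : ℕ) : ℝ) / (N : ℝ) := by
  apply div_nonneg _ (Nat.cast_nonneg N)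
  exact Real.log_natCast_nonneg _

lemma covEnt_term_le {C : ι → Set X} (hC : (⋃ i, C i) = Set.univ) (N : ℕ) :
    Real.log ((coverNum (joinC F C N) : ℕ) : ℝ) / (N : ℝ) ≤ Real.log (Fintype.card ι) := by
  classical
  have h1 : coverNum (joinC F C N) ≤ Fintype.card (Fin N → ι) :=
    coverNum_le_card (joinC_covers F hC N)
  have h2 : Real.log ((coverNum (joinC F C N) : ℕ) : ℝ) ≤ (N : ℝ) * Real.log (Fintype.card ι) := by
    calc Real.log ((coverNum (joinC F C N) : ℕ) : ℝ) ≤ Real.log (Fintype.card (Fin N → ι)) :=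
          log_nat_mono h1
    _ = (N : ℝ) * Real.log (Fintype.card ι) := by
          rw [Fintype.card_fun, Fintype.card_fin]
          push_cast
          rw [Real.log_pow]
  rcases Nat.eq_zero_or_pos N with rfl | hN
  · simpa using Real.log_natCast_nonneg (Fintype.card ι)
  · rw [div_le_iff₀ (by exact_mod_cast hN)]
    linarith [h2]

lemma covEnt_nonneg [Nonempty X] {C : ι → Set X} (hC : (⋃ i, C i) = Set.univ) :
    0 ≤ covEnt F C := by
  rw [covEnt_eq]
  apply Filter.le_limsup_of_frequently_le
  · exact Filter.Eventually.frequently (Filter.Eventually.of_forall (covEnt_term_nonneg F hC))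
  · exact ⟨Real.log (Fintype.card ι),
      Filter.eventually_map.2 (Filter.Eventually.of_forall (covEnt_term_le F hC))⟩

lemma covEnt_le_log_card [Nonempty X] {C : ι → Set X} (hC : (⋃ i, C i) = Set.univ) :
    covEnt F C ≤ Real.log (Fintype.card ι) := by
  rw [covEnt_eq]
  apply Filter.limsup_le_of_le
  · exact Filter.isCoboundedUnder_le_of_eventually_le _
      (Filter.Eventually.of_forall (covEnt_term_nonneg F hC))
  · exact Filter.Eventually.of_forall (covEnt_term_le F hC)

lemma covEnt_le_of_refines [Nonempty X] {C : ι → Set X} {D : κ → Set X}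
    (hC : (⋃ i, C i) = Set.univ) (hD : (⋃ j, D j) = Set.univ)
    (h : ∀ j, ∃ i, D j ⊆ C i) : covEnt F C ≤ covEnt F D := by
  rw [covEnt_eq, covEnt_eq]
  apply Filter.limsup_le_limsup
  · apply Filter.Eventually.of_forall
    intro N
    rcases Nat.eq_zero_or_pos N with rfl | hN
    · simp
    · have hnum : coverNum (joinC F C N) ≤ coverNum (joinC F D N) := by
        apply coverNum_le_of_refines (joinC_covers F hD N)
        intro g
        choose φ hφ using h
        refine ⟨fun t => φ (g t), fun x hx => ?_⟩
        rw [mem_joinC] at *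
        exact fun t => hφ _ (hx t)
      exact div_le_div_of_nonneg_right (log_nat_mono hnum) (Nat.cast_nonneg N)
  · exact Filter.isCoboundedUnder_le_of_eventually_le _
      (Filter.Eventually.of_forall (covEnt_term_nonneg F hC))
  · exact ⟨Real.log (Fintype.card κ),
      Filter.eventually_map.2 (Filter.Eventually.of_forall (covEnt_term_le F hD))⟩

end CovEnt

section Reindex

variable {X ι κ : Type*} [Fintype ι] [Fintype κ] (F : X → X)

lemma covEnt_reindex (e : κ ≃ ι) (C : ι → Set X) :
    covEnt F (fun j => C (e j)) = covEnt F C := by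
  rw [covEnt_eq, covEnt_eq]
  congr 1
  funext N
  congr 2
  have : joinC F (fun j => C (e j)) N =
      fun g : Fin N → κ => joinC F C N ((Equiv.piCongrRight fun _ : Fin N => e) g) := rfl
  rw [this, coverNum_reindex (Equiv.piCongrRight fun _ : Fin N => e) (joinC F C N)]

end Reindex

section LimsupHelpers

open Filter

lemma isBoundedUnder_of_forall {u : ℕ → ℝ} {c : ℝ} (h : ∀ n, u n ≤ c) :
    IsBoundedUnder (· ≤ ·) atTop u :=
  ⟨c, Filter.eventually_map.2 (Eventually.of_forall h)⟩

lemma isBoundedUnder_of_eventually {u : ℕ → ℝ} {c : ℝ} (h : ∀ᶠ n in atTop, u n ≤ c) :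
    IsBoundedUnder (· ≤ ·) atTop u :=
  ⟨c, Filter.eventually_map.2 h⟩

lemma limsup_shift (w : ℕ → ℝ) (M : ℕ) :
    limsup (fun n => w (n + M)) atTop = limsup w atTop := by
  conv_rhs => rw [← Filter.map_add_atTop_eq_nat M]
  simp only [Filter.limsup, Filter.map_map]
  rfl

lemma limsup_le_limsup_add_error {u v e : ℕ → ℝ}
    (hu : ∀ᶠ n in atTop, 0 ≤ u n)
    (hv : IsBoundedUnder (· ≤ ·) atTop v)
    (he : Filter.Tendsto e atTop (nhds 0))
    (h : ∀ᶠ n in atTop, u n ≤ v n + e n) :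
    limsup u atTop ≤ limsup v atTop := by
  apply le_of_forall_pos_le_add
  intro ε hε
  have hv2 : ∀ᶠ n in atTop, v n < limsup v atTop + ε / 2 :=
    eventually_lt_of_limsup_lt (by linarith) hv
  have he2 : ∀ᶠ n in atTop, e n < ε / 2 :=
    he.eventually_lt_const (by positivity)
  apply Filter.limsup_le_of_le (isCoboundedUnder_le_of_eventually_le _ hu)
  filter_upwards [hv2, he2, h] with n h1 h2 h3
  linarith

lemma limsup_rate_shift {f : ℕ → ℝ} {K : ℝ} (hf0 : ∀ n, 0 ≤ f n)
    (hfK : ∀ n, 1 ≤ n → f n ≤ K * n) (M : ℕ) :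
    limsup (fun n => f (n + M) / (n : ℝ)) atTop ≤ limsup (fun n => f n / (n : ℝ)) atTop := by
  have hK : 0 ≤ K := by
    have h1 := hfK 1 le_rfl
    have h2 := hf0 1
    simp at h1
    linarith
  have hshift : limsup (fun n : ℕ => f (n + M) / ((n : ℝ) + M)) atTop
      = limsup (fun n : ℕ => f n / (n : ℝ)) atTop := by
    rw [← limsup_shift (fun n : ℕ => f n / (n : ℝ)) M]
    congr 1
    funext n
    push_cast
    ring_nf
  rw [← hshift]
  apply limsup_le_limsup_add_error (e := fun n : ℕ => K * M / (n : ℝ))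
  · exact Eventually.of_forall fun n => div_nonneg (hf0 _) (Nat.cast_nonneg n)
  · apply isBoundedUnder_of_forall (c := K)
    intro n
    rcases Nat.eq_zero_or_pos (n + M) with h | h
    · have hn : n = 0 := by omega
      have hM : M = 0 := by omega
      subst hn; subst hM
      simp only [Nat.add_zero, Nat.cast_zero, add_zero, div_zero]
      exact hK
    · have hpos : (0 : ℝ) < (n : ℝ) + (M : ℝ) := by
        have : (0 : ℕ) < n + M := h
        exact_mod_cast this
      have ha : f (n + M) ≤ K * ((n : ℝ) + M) := by
        have := hfK (n + M) h
        push_cast at this ⊢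
        linarith
      rw [div_le_iff₀ hpos]
      linarith
  · exact tendsto_const_div_atTop_nhds_zero_nat _
  · filter_upwards [Filter.eventually_ge_atTop 1] with n hn
    have hnpos : (0 : ℝ) < (n : ℝ) := by exact_mod_cast hn
    have hMpos : (0 : ℝ) < (n : ℝ) + M := by positivity
    set a := f (n + M) with hadef
    have ha0 : 0 ≤ a := hf0 _
    have haK : a ≤ K * ((n : ℝ) + M) := by
      have := hfK (n + M) (by omega)
      push_cast at this ⊢
      linarith
    have h1 : a / (n : ℝ) = a / ((n : ℝ) + M) + a * M / ((n : ℝ) * ((n : ℝ) + M)) := by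
      field_simp
    have h2 : a * M / ((n : ℝ) * ((n : ℝ) + M)) ≤ K * M / (n : ℝ) := by
      rw [div_le_div_iff₀ (by positivity) hnpos]
      have hint := mul_le_mul_of_nonneg_right
        (mul_le_mul_of_nonneg_right haK (Nat.cast_nonneg (α := ℝ) M)) (le_of_lt hnpos)
      nlinarith [hint]
    rw [h1]
    linarith

end LimsupHelpers

section Covers

variable {A ι : Type*} [Fintype ι]

lemma mem_covSq {C : ι → Set (Config A)} {n : ℕ} {g : {v : ℤ × ℤ // v ∈ Esq n} → ι}
    {x : Config A} :
    x ∈ covSq C n g ↔ ∀ v : {v : ℤ × ℤ // v ∈ Esq n}, shift v.1 x ∈ C (g v) := by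
  simp [covSq]

lemma mem_covBand {C : ι → Set (Config A)} {r n : ℕ}
    {g : {v : ℤ × ℤ // v ∈ Eband r n} → ι} {x : Config A} :
    x ∈ covBand C r n g ↔ ∀ v : {v : ℤ × ℤ // v ∈ Eband r n}, shift v.1 x ∈ C (g v) := by
  simp [covBand]

lemma covSq_covers {C : ι → Set (Config A)} (hC : (⋃ i, C i) = Set.univ) (n : ℕ) :
    (⋃ g, covSq C n g) = Set.univ := by
  apply Set.eq_univ_of_forall
  intro x
  have hC' : ∀ y : Config A, ∃ i, y ∈ C i := fun y => by
    have : y ∈ ⋃ i, C i := hC ▸ Set.mem_univ y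
    exact Set.mem_iUnion.1 this
  choose g hg using fun v : {v : ℤ × ℤ // v ∈ Esq n} => hC' (shift v.1 x)
  exact Set.mem_iUnion.2 ⟨g, mem_covSq.2 hg⟩

lemma covBand_covers {C : ι → Set (Config A)} (hC : (⋃ i, C i) = Set.univ) (r n : ℕ) :
    (⋃ g, covBand C r n g) = Set.univ := by
  apply Set.eq_univ_of_forall
  intro x
  have hC' : ∀ y : Config A, ∃ i, y ∈ C i := fun y => by
    have : y ∈ ⋃ i, C i := hC ▸ Set.mem_univ y
    exact Set.mem_iUnion.1 this
  choose g hg using fun v : {v : ℤ × ℤ // v ∈ Eband r n} => hC' (shift v.1 x)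
  exact Set.mem_iUnion.2 ⟨g, mem_covBand.2 hg⟩

lemma S0cov_covers : (⋃ a : A, S0cov a) = Set.univ :=
  Set.eq_univ_of_forall fun x => Set.mem_iUnion.2 ⟨x (0, 0), rfl⟩

lemma mem_covSq_S0 {n : ℕ} {q : {v : ℤ × ℤ // v ∈ Esq n} → A} {x : Config A} :
    x ∈ covSq S0cov n q ↔ ∀ v : {v : ℤ × ℤ // v ∈ Esq n}, x v.1 = q v := by
  simp [covSq, S0cov, shift]

lemma mem_covBand_S0 {r n : ℕ} {q : {v : ℤ × ℤ // v ∈ Eband r n} → A} {x : Config A} :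
    x ∈ covBand S0cov r n q ↔ ∀ v : {v : ℤ × ℤ // v ∈ Eband r n}, x v.1 = q v := by
  simp [covBand, S0cov, shift]

end Covers

section Determinism

variable {A : Type*} [Fintype A] [Nonempty A] {F : Config A → Config A} {r : ℕ}

lemma coverNum_sq_le_band (hF : IsCA F r) {n : ℕ} (hrn : r ≤ n) (N : ℕ) :
    coverNum (joinC F (covSq (S0cov (A := A)) n) N) ≤
      Fintype.card ({v : ℤ × ℤ // v ∈ Esq n} → A) *
        coverNum (joinC F (covBand (S0cov (A := A)) r n) N) := by
  classical
  set V : (({v : ℤ × ℤ // v ∈ Esq n} → A) × (Fin N → ({v : ℤ × ℤ // v ∈ Eband r n} → A)))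
      → Set (Config A) :=
    fun pg => covSq S0cov n pg.1 ∩ joinC F (covBand S0cov r n) N pg.2 with hV
  have hband : (⋃ g, joinC F (covBand (S0cov (A := A)) r n) N g) = Set.univ :=
    joinC_covers F (covBand_covers S0cov_covers r n) N
  have hVcov : (⋃ pg, V pg) = Set.univ := by
    apply Set.eq_univ_of_forall
    intro x
    obtain ⟨g, hg⟩ := Set.mem_iUnion.1 (hband ▸ Set.mem_univ x)
    refine Set.mem_iUnion.2 ⟨(fun v => x v.1, g), ⟨mem_covSq_S0.2 fun v => rfl, hg⟩⟩
  have hrefine : ∀ pg, ∃ h, V pg ⊆ joinC F (covSq (S0cov (A := A)) n) N h := by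
    intro pg
    rcases Set.eq_empty_or_nonempty (V pg) with hemp | ⟨x0, hx0⟩
    · exact ⟨Classical.arbitrary _, by rw [hemp]; exact Set.empty_subset _⟩
    · obtain ⟨p, g⟩ := pg
      have key : ∀ t : ℕ, t < N → ∀ y ∈ V (p, g), ∀ v ∈ Esq n, F^[t] y v = F^[t] x0 v := by
        intro t
        induction t with
        | zero =>
          intro _ y hy v hv
          have h1 := mem_covSq_S0.1 hy.1 ⟨v, hv⟩
          have h2 := mem_covSq_S0.1 hx0.1 ⟨v, hv⟩
          simpa using h1.trans h2.symm
        | succ t ih =>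
          intro hlt y hy v hv
          rcases mem_Esq_or_band (r := r) hv with hint | hbd
          · have hagree : ∀ w ∈ Esq n, F^[t] y w = F^[t] x0 w :=
              ih (by omega) y hy
            have := hF.step hrn hagree v hint
            simpa [Function.iterate_succ_apply'] using this
          · have hy2 := (mem_joinC F).1 hy.2 ⟨t + 1, hlt⟩
            have hx2 := (mem_joinC F).1 hx0.2 ⟨t + 1, hlt⟩
            have h1 := mem_covBand_S0.1 hy2 ⟨v, hbd⟩
            have h2 := mem_covBand_S0.1 hx2 ⟨v, hbd⟩
            simpa using h1.trans h2.symm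
      refine ⟨fun s v => F^[(s : ℕ)] x0 v.1, ?_⟩
      intro y hy
      rw [mem_joinC]
      intro s
      rw [mem_covSq_S0]
      intro v
      exact key (s : ℕ) s.isLt y hy v.1 v.2
  have h1 : coverNum (joinC F (covSq (S0cov (A := A)) n) N) ≤ coverNum V :=
    coverNum_le_of_refines hVcov hrefine
  have h2 : coverNum V ≤ Fintype.card ({v : ℤ × ℤ // v ∈ Esq n} → A) *
      coverNum (joinC F (covBand (S0cov (A := A)) r n) N) := by
    obtain ⟨t, hcard, hcov⟩ := coverNum_spec hband
    have hcov2 : (⋃ pg ∈ ((Finset.univ : Finset ({v : ℤ × ℤ // v ∈ Esq n} → A)) ×ˢ t), V pg)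
        = Set.univ := by
      apply Set.eq_univ_of_forall
      intro x
      obtain ⟨g, hg, hxg⟩ := Set.mem_iUnion₂.1 (hcov ▸ Set.mem_univ x)
      refine Set.mem_iUnion₂.2 ⟨(fun v => x v.1, g), ?_, ⟨mem_covSq_S0.2 fun v => rfl, hxg⟩⟩
      exact Finset.mem_product.2 ⟨Finset.mem_univ _, hg⟩
    calc coverNum V ≤ _ := coverNum_le hcov2
    _ = _ := by rw [Finset.card_product, Finset.card_univ, hcard]
  exact le_trans h1 h2

lemma covEnt_sq_eq_band_S0 (hF : IsCA F r) {n : ℕ} (hrn : r ≤ n) :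
    covEnt F (covSq (S0cov (A := A)) n) = covEnt F (covBand (S0cov (A := A)) r n) := by
  apply le_antisymm
  · rw [covEnt_eq, covEnt_eq]
    apply limsup_le_limsup_add_error
      (e := fun N : ℕ => Real.log (Fintype.card ({v : ℤ × ℤ // v ∈ Esq n} → A)) / (N : ℝ))
    · exact Filter.Eventually.of_forall
        (covEnt_term_nonneg F (covSq_covers S0cov_covers n))
    · exact isBoundedUnder_of_forall
        (covEnt_term_le F (covBand_covers S0cov_covers r n))
    · exact tendsto_const_div_atTop_nhds_zero_nat _
    · apply Filter.Eventually.of_forall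
      intro N
      have hb1 : 1 ≤ coverNum (joinC F (covBand (S0cov (A := A)) r n) N) :=
        one_le_coverNum (joinC_covers F (covBand_covers S0cov_covers r n) N)
      have hlog : Real.log (coverNum (joinC F (covSq (S0cov (A := A)) n) N) : ℝ) ≤
          Real.log (Fintype.card ({v : ℤ × ℤ // v ∈ Esq n} → A)) +
          Real.log (coverNum (joinC F (covBand (S0cov (A := A)) r n) N) : ℝ) := by
        have h2 := log_nat_mono (coverNum_sq_le_band hF hrn N)
        rw [Nat.cast_mul, Real.log_mul
          (Nat.cast_ne_zero.2 Fintype.card_ne_zero)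
          (Nat.cast_ne_zero.2 (by omega))] at h2
        exact h2
      have h3 := div_le_div_of_nonneg_right hlog (Nat.cast_nonneg N)
      rw [add_div] at h3
      linarith
  · apply covEnt_le_of_refines F (covBand_covers S0cov_covers r n) (covSq_covers S0cov_covers n)
    intro q
    refine ⟨fun v => q ⟨v.1, Eband_subset v.2⟩, ?_⟩
    intro x hx
    rw [mem_covBand_S0]
    intro v
    exact mem_covSq_S0.1 hx ⟨v.1, Eband_subset v.2⟩

end Determinism

section Lebesgue

variable {A : Type*} [Fintype A] [TopologicalSpace A] [DiscreteTopology A]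

lemma exists_lebesgue {m : ℕ} {C : Fin (m + 1) → Set (Config A)}
    (hopen : ∀ i, IsOpen (C i)) (hcov : (⋃ i, C i) = Set.univ) :
    ∃ M : ℕ, ∀ x : Config A, ∃ i, ∀ y : Config A, (∀ v ∈ Esq M, y v = x v) → y ∈ C i := by
  classical
  have hC' : ∀ x : Config A, ∃ i, x ∈ C i := fun x => Set.mem_iUnion.1 (hcov ▸ Set.mem_univ x)
  choose idx hidx using hC'
  have hbasic : ∀ x : Config A, ∃ Mx : ℕ,
      ∀ y : Config A, (∀ v ∈ Esq Mx, y v = x v) → y ∈ C (idx x) := by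
    intro x
    obtain ⟨I, u, hu, hIu⟩ := (isOpen_pi_iff.1 (hopen (idx x))) x (hidx x)
    refine ⟨I.sup (fun v => max v.1.natAbs v.2.natAbs), fun y hy => hIu ?_⟩
    rw [Set.mem_pi]
    intro a ha
    rw [Finset.mem_coe] at ha
    have haE : a ∈ Esq (I.sup fun v => max v.1.natAbs v.2.natAbs) := by
      rw [mem_Esq]
      have h1 : max a.1.natAbs a.2.natAbs ≤ I.sup (fun v => max v.1.natAbs v.2.natAbs) :=
        Finset.le_sup (f := fun v : ℤ × ℤ => max v.1.natAbs v.2.natAbs) ha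
      have h2 : (max a.1.natAbs a.2.natAbs : ℤ) ≤
          ((I.sup fun v => max v.1.natAbs v.2.natAbs : ℕ) : ℤ) := by exact_mod_cast h1
      have h3 : (a.1.natAbs : ℤ) ≤ (max a.1.natAbs a.2.natAbs : ℕ) := by exact_mod_cast le_max_left _ _
      have h4 : (a.2.natAbs : ℤ) ≤ (max a.1.natAbs a.2.natAbs : ℕ) := by exact_mod_cast le_max_right _ _
      omega
    rw [hy a haE]
    exact (hu a ha).2
  choose Mx hMx using hbasic
  set U : Config A → Set (Config A) := fun x => {y | ∀ v ∈ Esq (Mx x), y v = x v} with hU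
  have hUopen : ∀ x, IsOpen (U x) := by
    intro x
    have heq : U x = ⋂ v ∈ Esq (Mx x), (fun y : Config A => y v) ⁻¹' {x v} := by
      ext y; simp [hU]
    rw [heq]
    exact isOpen_biInter_finset fun v _ =>
      (continuous_apply v).isOpen_preimage _ (isOpen_discrete _)
  have hUcov : (Set.univ : Set (Config A)) ⊆ ⋃ x, U x :=
    fun x _ => Set.mem_iUnion.2 ⟨x, fun v _ => rfl⟩
  obtain ⟨t, ht⟩ := isCompact_univ.elim_finite_subcover U hUopen hUcov
  refine ⟨t.sup Mx, ?_⟩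
  intro x
  obtain ⟨z, hz, hxz⟩ := Set.mem_iUnion₂.1 (ht (Set.mem_univ x))
  refine ⟨idx z, fun y hy => hMx z y ?_⟩
  intro v hv
  have hv2 : v ∈ Esq (t.sup Mx) := Esq_mono (Finset.le_sup hz) hv
  rw [hy v hv2]
  exact hxz v hv

end Lebesgue

section Rates

variable {A : Type*} [Fintype A] [Nonempty A] [TopologicalSpace A] [DiscreteTopology A]
variable {F : Config A → Config A} {r : ℕ}

lemma cyl_refines {m M n : ℕ} {C : Fin (m + 1) → Set (Config A)}
    (hM : ∀ x : Config A, ∃ i, ∀ y : Config A, (∀ v ∈ Esq M, y v = x v) → y ∈ C i)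
    (S : Finset (ℤ × ℤ)) (hS : S ⊆ Esq n) (q : {v : ℤ × ℤ // v ∈ Esq (n + M)} → A) :
    ∃ g : {v : ℤ × ℤ // v ∈ S} → Fin (m + 1),
      covSq S0cov (n + M) q ⊆ ⋂ v : {v : ℤ × ℤ // v ∈ S}, shift v.1 ⁻¹' C (g v) := by
  classical
  rcases Set.eq_empty_or_nonempty (covSq S0cov (n + M) q) with hemp | ⟨x, hx⟩
  · exact ⟨Classical.arbitrary _, by rw [hemp]; exact Set.empty_subset _⟩
  · choose i hi using fun v : {v : ℤ × ℤ // v ∈ S} => hM (shift v.1 x)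
    refine ⟨i, ?_⟩
    intro y hy
    rw [Set.mem_iInter]
    intro v
    apply hi v
    intro u hu
    have husq : u + v.1 ∈ Esq (n + M) := add_mem_Esq_add hu (hS v.2)
    show y (u + v.1) = x (u + v.1)
    have h1 := mem_covSq_S0.1 hy ⟨u + v.1, husq⟩
    have h2 := mem_covSq_S0.1 hx ⟨u + v.1, husq⟩
    exact h1.trans h2.symm

lemma covEnt_band_S0_le_lin (n : ℕ) (hn : 1 ≤ n) :
    covEnt F (covBand (S0cov (A := A)) r n) ≤
      ((12 * r + 4 : ℕ) * Real.log (Fintype.card A)) * n := by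
  classical
  have h1 : covEnt F (covBand (S0cov (A := A)) r n) ≤
      Real.log (Fintype.card ({v : ℤ × ℤ // v ∈ Eband r n} → A)) :=
    covEnt_le_log_card F (covBand_covers S0cov_covers r n)
  have h2 : Real.log (Fintype.card ({v : ℤ × ℤ // v ∈ Eband r n} → A)) =
      ((Eband r n).card : ℝ) * Real.log (Fintype.card A) := by
    rw [Fintype.card_fun, Fintype.card_coe]
    push_cast
    rw [Real.log_pow]
  have h3 : ((Eband r n).card : ℝ) ≤ ((12 * r + 4 : ℕ) : ℝ) * n := by
    have := card_Eband_le r n hn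
    push_cast
    exact_mod_cast this
  have h4 : 0 ≤ Real.log (Fintype.card A) := Real.log_natCast_nonneg _
  calc covEnt F (covBand (S0cov (A := A)) r n) ≤ _ := h1
  _ = _ := h2
  _ ≤ (((12 * r + 4 : ℕ) : ℝ) * n) * Real.log (Fintype.card A) :=
      mul_le_mul_of_nonneg_right h3 h4
  _ = _ := by push_cast; ring

lemma rate_core (hF : IsCA F r) (u : ℕ → ℝ) (hu0 : ∀ n, 0 ≤ u n) (M : ℕ)
    (hle : ∀ n, r ≤ n → u n ≤ covEnt F (covSq (S0cov (A := A)) (n + M))) :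
    Filter.atTop.limsup (fun n : ℕ => u n / (n : ℝ)) ≤ ERcov F (S0cov (A := A)) r := by
  classical
  set f : ℕ → ℝ := fun k => covEnt F (covBand (S0cov (A := A)) r k) with hf
  set K : ℝ := (12 * r + 4 : ℕ) * Real.log (Fintype.card A) with hK
  have hK0 : 0 ≤ K := mul_nonneg (Nat.cast_nonneg _) (Real.log_natCast_nonneg _)
  have hf0 : ∀ k, 0 ≤ f k := fun k => covEnt_nonneg F (covBand_covers S0cov_covers r k)
  have hfK : ∀ k, 1 ≤ k → f k ≤ K * k := fun k hk => covEnt_band_S0_le_lin k hk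
  have step1 : Filter.atTop.limsup (fun n : ℕ => u n / (n : ℝ)) ≤
      Filter.atTop.limsup (fun n : ℕ => f (n + M) / (n : ℝ)) := by
    apply Filter.limsup_le_limsup
    · filter_upwards [Filter.eventually_ge_atTop r] with n hn
      have heq : covEnt F (covSq (S0cov (A := A)) (n + M)) = f (n + M) :=
        covEnt_sq_eq_band_S0 hF (by omega)
      exact div_le_div_of_nonneg_right (heq ▸ hle n hn) (Nat.cast_nonneg n)
    · exact Filter.isCoboundedUnder_le_of_eventually_le _
        (Filter.Eventually.of_forall fun n => div_nonneg (hu0 n) (Nat.cast_nonneg n))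
    · apply isBoundedUnder_of_eventually (c := K * (1 + M))
      filter_upwards [Filter.eventually_ge_atTop 1] with n hn
      have hnpos : (0 : ℝ) < n := by exact_mod_cast hn
      have h1 : f (n + M) ≤ K * ((n : ℝ) + M) := by
        have := hfK (n + M) (by omega)
        push_cast at this
        linarith
      have h2 : K * ((n : ℝ) + M) ≤ K * (1 + M) * n := by
        have hn1 : (1 : ℝ) ≤ n := by exact_mod_cast hn
        nlinarith [mul_nonneg (mul_nonneg hK0 (Nat.cast_nonneg (α := ℝ) M))
          (sub_nonneg.2 hn1)]
      rw [div_le_iff₀ hnpos]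
      linarith
  have step2 : Filter.atTop.limsup (fun n : ℕ => f (n + M) / (n : ℝ)) ≤
      Filter.atTop.limsup (fun n : ℕ => f n / (n : ℝ)) :=
    limsup_rate_shift hf0 hfK M
  exact step1.trans step2

lemma sqRate_le (hF : IsCA F r) {m : ℕ} {C : Fin (m + 1) → Set (Config A)}
    (hopen : ∀ i, IsOpen (C i)) (hcov : (⋃ i, C i) = Set.univ) :
    Filter.atTop.limsup (fun n : ℕ => covEnt F (covSq C n) / (n : ℝ)) ≤
      ERcov F (S0cov (A := A)) r := by
  obtain ⟨M, hM⟩ := exists_lebesgue hopen hcov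
  apply rate_core hF _ (fun n => covEnt_nonneg F (covSq_covers hcov n)) M
  intro n _
  apply covEnt_le_of_refines F (covSq_covers hcov n) (covSq_covers S0cov_covers (n + M))
  intro q
  exact cyl_refines hM (Esq n) subset_rfl q

lemma bandRate_le (hF : IsCA F r) {m : ℕ} {C : Fin (m + 1) → Set (Config A)}
    (hopen : ∀ i, IsOpen (C i)) (hcov : (⋃ i, C i) = Set.univ) :
    ERcov F C r ≤ ERcov F (S0cov (A := A)) r := by
  obtain ⟨M, hM⟩ := exists_lebesgue hopen hcov
  apply rate_core hF _ (fun n => covEnt_nonneg F (covBand_covers hcov r n)) M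
  intro n _
  apply covEnt_le_of_refines F (covBand_covers hcov r n) (covSq_covers S0cov_covers (n + M))
  intro q
  exact cyl_refines hM (Eband r n) Eband_subset q

end Rates

section EmptyCase

lemma coverNum_empty {X ι : Type*} [Fintype ι] [IsEmpty X] (C : ι → Set X) :
    coverNum C = 0 := by
  unfold coverNum
  rw [Nat.sInf_eq_zero]
  exact Or.inl ⟨∅, rfl, Set.eq_univ_of_forall fun x => isEmptyElim x⟩

lemma covEnt_empty {X ι : Type*} [Fintype ι] [IsEmpty X] (F : X → X) (C : ι → Set X) :
    covEnt F C = 0 := by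
  rw [covEnt_eq]
  have h : (fun N : ℕ => Real.log ((coverNum (joinC F C N) : ℕ) : ℝ) / (N : ℝ)) =
      fun _ : ℕ => (0 : ℝ) := by
    funext N
    rw [coverNum_empty]
    simp
  rw [h]
  exact Filter.limsup_const 0

lemma ERcov_empty {A ι : Type*} [Fintype ι] [IsEmpty (Config A)]
    (F : Config A → Config A) (C : ι → Set (Config A)) (r : ℕ) : ERcov F C r = 0 := by
  unfold ERcov
  have h : (fun n : ℕ => covEnt F (covBand C r n) / (n : ℝ)) = fun _ : ℕ => (0 : ℝ) := by
    funext n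
    rw [covEnt_empty]
    simp
  rw [h]
  exact Filter.limsup_const 0

end EmptyCase

section S0Membership

variable {A : Type*} [Fintype A] [TopologicalSpace A] [DiscreteTopology A]

lemma S0cov_open (a : A) : IsOpen (S0cov (A := A) a) := by
  have h : S0cov (A := A) a = (fun x : Config A => x ((0, 0) : ℤ × ℤ)) ⁻¹' {a} := rfl
  rw [h]
  exact (continuous_apply ((0, 0) : ℤ × ℤ)).isOpen_preimage _ (isOpen_discrete _)

variable [Nonempty A] {F : Config A → Config A} {r : ℕ}

lemma exists_S0_fin :
    ∃ (m : ℕ) (e : Fin (m + 1) ≃ A), True := by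
  refine ⟨Fintype.card A - 1, ?_, trivial⟩
  have h : Fintype.card A = Fintype.card A - 1 + 1 :=
    (Nat.succ_pred_eq_of_pos Fintype.card_pos).symm
  exact (Fintype.equivFinOfCardEq h).symm

lemma covEnt_covBand_comp (e : Fin (Fintype.card A - 1 + 1) ≃ A) (n : ℕ) :
    covEnt F (covBand (fun i => S0cov (e i)) r n) = covEnt F (covBand (S0cov (A := A)) r n) := by
  have h : covBand (fun i => S0cov (e i)) r n =
      fun g => covBand (S0cov (A := A)) r n ((Equiv.piCongrRight fun _ => e) g) := rfl
  rw [h]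
  exact covEnt_reindex F (Equiv.piCongrRight fun _ => e) (covBand (S0cov (A := A)) r n)

lemma covEnt_covSq_comp (e : Fin (Fintype.card A - 1 + 1) ≃ A) (n : ℕ) :
    covEnt F (covSq (fun i => S0cov (e i)) n) = covEnt F (covSq (S0cov (A := A)) n) := by
  have h : covSq (fun i => S0cov (e i)) n =
      fun g => covSq (S0cov (A := A)) n ((Equiv.piCongrRight fun _ => e) g) := rfl
  rw [h]
  exact covEnt_reindex F (Equiv.piCongrRight fun _ => e) (covSq (S0cov (A := A)) n)

end S0Membership

/-- For any CA `F` on `A^{ℤ²}`, the supremum over all finite open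
covers `C` of `limsup_n h(C_n,F)/n` (full squares `E_n`) equals the supremum over all
finite open covers of `limsup_n h(C'_n,F)/n` (bands `E'_n`), and both equal
`ER(S_0,F) = ER(A^{ℤ²},F)`. -/
theorem topEntropyRate_full_square_version {A : Type*} [Fintype A]
    [TopologicalSpace A] [DiscreteTopology A]
    (F : Config A → Config A) (r : ℕ) (hF : IsCA F r) :
    sSup {x : ℝ | ∃ (m : ℕ) (C : Fin (m + 1) → Set (Config A)),
        (∀ i, IsOpen (C i)) ∧ (⋃ i, C i) = Set.univ ∧
        x = Filter.atTop.limsup fun n : ℕ => covEnt F (covSq C n) / (n : ℝ)} = ERtop F r ∧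
    ERtop F r = ERcov F (S0cov (A := A)) r := by
  classical
  have hBand : IsGreatest {x : ℝ | ∃ (m : ℕ) (C : Fin (m + 1) → Set (Config A)),
      (∀ i, IsOpen (C i)) ∧ (⋃ i, C i) = Set.univ ∧ x = ERcov F C r}
      (ERcov F (S0cov (A := A)) r) := by
    rcases isEmpty_or_nonempty A with hA | hA
    · haveI : IsEmpty (Config A) := ⟨fun x => IsEmpty.false (x ((0, 0) : ℤ × ℤ))⟩
      constructor
      · refine ⟨0, fun _ => Set.univ, fun _ => isOpen_univ, Set.iUnion_const Set.univ, ?_⟩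
        rw [ERcov_empty, ERcov_empty]
      · rintro x ⟨m, C, -, -, rfl⟩
        rw [ERcov_empty, ERcov_empty]
    · constructor
      · have h : Fintype.card A = Fintype.card A - 1 + 1 :=
          (Nat.succ_pred_eq_of_pos Fintype.card_pos).symm
        set e : Fin (Fintype.card A - 1 + 1) ≃ A := (Fintype.equivFinOfCardEq h).symm with he
        refine ⟨Fintype.card A - 1, fun i => S0cov (e i), fun i => S0cov_open _, ?_, ?_⟩
        · apply Set.eq_univ_of_forall
          intro x
          exact Set.mem_iUnion.2 ⟨e.symm (x (0, 0)), by simp [S0cov]⟩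
        · unfold ERcov
          congr 1
          funext n
          rw [covEnt_covBand_comp e n]
      · rintro x ⟨m, C, ho, hc, rfl⟩
        exact bandRate_le hF ho hc
  have hSq : IsGreatest {x : ℝ | ∃ (m : ℕ) (C : Fin (m + 1) → Set (Config A)),
      (∀ i, IsOpen (C i)) ∧ (⋃ i, C i) = Set.univ ∧
      x = Filter.atTop.limsup fun n : ℕ => covEnt F (covSq C n) / (n : ℝ)}
      (ERcov F (S0cov (A := A)) r) := by
    rcases isEmpty_or_nonempty A with hA | hA
    · haveI : IsEmpty (Config A) := ⟨fun x => IsEmpty.false (x ((0, 0) : ℤ × ℤ))⟩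
      constructor
      · refine ⟨0, fun _ => Set.univ, fun _ => isOpen_univ, Set.iUnion_const Set.univ, ?_⟩
        rw [ERcov_empty]
        have h0 : (fun n : ℕ =>
            covEnt F (covSq (fun _ : Fin (0 + 1) => (Set.univ : Set (Config A))) n) / (n : ℝ))
            = fun _ : ℕ => (0 : ℝ) := by
          funext n; rw [covEnt_empty]; simp
        rw [h0, Filter.limsup_const]
      · rintro x ⟨m, C, -, -, rfl⟩
        rw [ERcov_empty]
        have h0 : (fun n : ℕ => covEnt F (covSq C n) / (n : ℝ)) = fun _ : ℕ => (0 : ℝ) := by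
          funext n; rw [covEnt_empty]; simp
        rw [h0, Filter.limsup_const]
    · constructor
      · have h : Fintype.card A = Fintype.card A - 1 + 1 :=
          (Nat.succ_pred_eq_of_pos Fintype.card_pos).symm
        set e : Fin (Fintype.card A - 1 + 1) ≃ A := (Fintype.equivFinOfCardEq h).symm with he
        refine ⟨Fintype.card A - 1, fun i => S0cov (e i), fun i => S0cov_open _, ?_, ?_⟩
        · apply Set.eq_univ_of_forall
          intro x
          exact Set.mem_iUnion.2 ⟨e.symm (x (0, 0)), by simp [S0cov]⟩
        · have hrfl : ERcov F (S0cov (A := A)) r = Filter.atTop.limsup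
              (fun n : ℕ => covEnt F (covBand (S0cov (A := A)) r n) / (n : ℝ)) := rfl
          rw [hrfl]
          apply Filter.limsup_congr
          filter_upwards [Filter.eventually_ge_atTop r] with n hn
          rw [covEnt_covSq_comp e n, covEnt_sq_eq_band_S0 hF hn]
      · rintro x ⟨m, C, ho, hc, rfl⟩
        exact sqRate_le hF ho hc
  have hER : ERtop F r = sSup {x : ℝ | ∃ (m : ℕ) (C : Fin (m + 1) → Set (Config A)),
      (∀ i, IsOpen (C i)) ∧ (⋃ i, C i) = Set.univ ∧ x = ERcov F C r} := rfl
  refine ⟨?_, ?_⟩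
  · rw [hSq.csSup_eq, hER, hBand.csSup_eq]
  · rw [hER, hBand.csSup_eq]
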